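/- Let E, F be smooth ℤ³-periodic vector fields on ℝ³ and φ^ε a standard mollifier with n = ℓ/|ℓ|. Then the following identity between mollified increment integrals holds: ∫_{𝕋³} ∇φ^ε(ℓ)·δE (δF_L · δE_L) + (2/|ℓ|) φ^ε n·δE (δF_T · δE_T) dℓ = ∫_{𝕋³} ∂_{ℓ_k}(φ^ε n_i n_j) δE_k δF_i δE_j dℓ + ∫_{𝕋³} (1/|ℓ|) φ^ε n·[δE (δE·δF) − δF (δE·δE)] dℓ, where δG(ℓ)(x) = G(x+ℓ) − G(x), G_L = n(n·G), G_T = G − n(n·G). -/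

import Mathlib

noncomputable section
open MeasureTheory

abbrev E3 := EuclideanSpace ℝ (Fin 3)

def ee (i : Fin 3) : E3 := EuclideanSpace.single i 1

def pd (f : E3 → ℝ) (k : Fin 3) (x : E3) : ℝ := fderiv ℝ f x (ee k)

def nv (ℓ : E3) (i : Fin 3) : ℝ := ℓ i / ‖ℓ‖

def dotp (a b : Fin 3 → ℝ) : ℝ := ∑ i, a i * b i

def Lproj (ℓ : E3) (v : Fin 3 → ℝ) : Fin 3 → ℝ := fun i => nv ℓ i * dotp (nv ℓ) v

def Tproj (ℓ : E3) (v : Fin 3 → ℝ) : Fin 3 → ℝ := fun i => v i - Lproj ℓ v i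

def incr (G : E3 → E3) (ℓ x : E3) : Fin 3 → ℝ := fun i => G (x + ℓ) i - G x i

def Periodic3 (G : E3 → E3) : Prop :=
  ∀ (x : E3) (m : Fin 3 → ℤ), G (x + (WithLp.equiv 2 (Fin 3 → ℝ)).symm (fun i => (m i : ℝ))) = G x

def Mollifier (φ : E3 → ℝ) : Prop :=
  ContDiff ℝ (⊤ : ℕ∞) φ ∧ HasCompactSupport φ ∧ (∀ ℓ, 0 ≤ φ ℓ) ∧
  (∀ ℓ ℓ' : E3, ‖ℓ‖ = ‖ℓ'‖ → φ ℓ = φ ℓ') ∧ (∫ ℓ : E3, φ ℓ) = 1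

def moll (φ : E3 → ℝ) (ε : ℝ) : E3 → ℝ := fun ℓ => (ε ^ 3)⁻¹ * φ (ε⁻¹ • ℓ)

def gradm (φe : E3 → ℝ) (ℓ : E3) : Fin 3 → ℝ := fun i => pd φe i ℓ

/-! ### Auxiliary lemmas -/

lemma norm_sq_coords (v : E3) : ‖v‖ ^ 2 = ∑ j, v j ^ 2 := by
  rw [EuclideanSpace.norm_eq, Real.sq_sqrt (by positivity)]
  simp [Real.norm_eq_abs, sq_abs]

lemma abs_coord_le (v : E3) (i : Fin 3) : |v i| ≤ ‖v‖ := by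
  have h : |v i| = Real.sqrt (v i ^ 2) := by rw [Real.sqrt_sq_eq_abs]
  rw [h, EuclideanSpace.norm_eq]
  apply Real.sqrt_le_sqrt
  calc v i ^ 2 = ‖v i‖ ^ 2 := by rw [Real.norm_eq_abs, sq_abs]
    _ ≤ ∑ j, ‖v j‖ ^ 2 :=
      Finset.single_le_sum (f := fun j => ‖v j‖ ^ 2) (fun j _ => by positivity)
        (Finset.mem_univ i)

lemma abs_nv_le_one (ℓ : E3) (i : Fin 3) : |nv ℓ i| ≤ 1 := by
  by_cases h : ℓ = 0
  · simp [nv, h]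
  · rw [nv, abs_div, abs_norm]
    exact div_le_one_of_le₀ (abs_coord_le ℓ i) (norm_nonneg _)

lemma abs_dotp_le {u v : Fin 3 → ℝ} {cu cv : ℝ} (hu : ∀ i, |u i| ≤ cu) (hv : ∀ i, |v i| ≤ cv) :
    |dotp u v| ≤ 3 * (cu * cv) := by
  have h0 : (0:ℝ) ≤ cu := le_trans (abs_nonneg _) (hu 0)
  calc |dotp u v| ≤ ∑ i, |u i * v i| := Finset.abs_sum_le_sum_abs _ _
    _ ≤ ∑ _i : Fin 3, cu * cv := by
        apply Finset.sum_le_sum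
        intro i _
        rw [abs_mul]
        exact mul_le_mul (hu i) (hv i) (abs_nonneg _) h0
    _ = 3 * (cu * cv) := by simp [Finset.sum_const]

lemma abs_Lproj_le {ℓ : E3} {v : Fin 3 → ℝ} {c : ℝ} (hv : ∀ i, |v i| ≤ c) (i : Fin 3) :
    |Lproj ℓ v i| ≤ 3 * c := by
  have h1 : |dotp (nv ℓ) v| ≤ 3 * (1 * c) := abs_dotp_le (abs_nv_le_one ℓ) hv
  have h2 : |Lproj ℓ v i| = |nv ℓ i| * |dotp (nv ℓ) v| := by
    rw [Lproj]; exact abs_mul _ _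
  rw [h2]
  calc |nv ℓ i| * |dotp (nv ℓ) v| ≤ 1 * (3 * (1 * c)) :=
        mul_le_mul (abs_nv_le_one ℓ i) h1 (abs_nonneg _) zero_le_one
    _ = 3 * c := by ring

lemma abs_Tproj_le {ℓ : E3} {v : Fin 3 → ℝ} {c : ℝ} (hv : ∀ i, |v i| ≤ c) (i : Fin 3) :
    |Tproj ℓ v i| ≤ 4 * c := by
  have h2 : |Tproj ℓ v i| ≤ |v i| + |Lproj ℓ v i| := by
    rw [Tproj]; exact abs_sub _ _
  calc |Tproj ℓ v i| ≤ |v i| + |Lproj ℓ v i| := h2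
    _ ≤ c + 3 * c := add_le_add (hv i) (abs_Lproj_le hv i)
    _ = 4 * c := by ring

lemma hasFDerivAt_norm3 {ℓ : E3} (hℓ : ℓ ≠ 0) :
    HasFDerivAt (fun y : E3 => ‖y‖) ((1 / (2 * ‖ℓ‖)) • (2 • innerSL ℝ ℓ)) ℓ := by
  have hn : ‖ℓ‖ ≠ 0 := norm_ne_zero_iff.2 hℓ
  have h1 := ((hasStrictFDerivAt_norm_sq ℓ).hasFDerivAt).sqrt (pow_ne_zero 2 hn)
  simpa only [Real.sqrt_sq (norm_nonneg _)] using h1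

lemma key_deriv_nv {ℓ : E3} (hℓ : ℓ ≠ 0) (i : Fin 3) :
    HasFDerivAt (fun y : E3 => nv y i)
      (ℓ i • (-(‖ℓ‖ ^ 2)⁻¹ • ((1 / (2 * ‖ℓ‖)) • (2 • innerSL ℝ ℓ)))
        + ‖ℓ‖⁻¹ • (EuclideanSpace.proj i : E3 →L[ℝ] ℝ)) ℓ := by
  have hn : ‖ℓ‖ ≠ 0 := norm_ne_zero_iff.2 hℓ
  have hinv : HasFDerivAt (fun y : E3 => (‖y‖)⁻¹)
      (-(‖ℓ‖ ^ 2)⁻¹ • ((1 / (2 * ‖ℓ‖)) • (2 • innerSL ℝ ℓ))) ℓ := by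
    have := (hasDerivAt_inv hn).comp_hasFDerivAt ℓ (hasFDerivAt_norm3 hℓ)
    simp at this ⊢
    exact this
  have hproj : HasFDerivAt (fun y : E3 => y i)
      ((EuclideanSpace.proj i : E3 →L[ℝ] ℝ)) ℓ :=
    (EuclideanSpace.proj i : E3 →L[ℝ] ℝ).hasFDerivAt
  have h := hproj.mul hinv
  have heq : (fun y : E3 => nv y i) = fun y : E3 => y i * (‖y‖)⁻¹ := by
    funext y; rw [nv, div_eq_mul_inv]
  rw [heq]
  exact h

set_option maxHeartbeats 1000000 in
lemma key_deriv (μ : E3 → ℝ) (hμ : ContDiff ℝ (⊤ : ℕ∞) μ) {ℓ : E3} (hℓ : ℓ ≠ 0) (i j k : Fin 3) :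
    pd (fun y => μ y * nv y i * nv y j) k ℓ
      = pd μ k ℓ * nv ℓ i * nv ℓ j
        + μ ℓ * nv ℓ j * (((if k = i then 1 else 0) - nv ℓ i * nv ℓ k) / ‖ℓ‖)
        + μ ℓ * nv ℓ i * (((if k = j then 1 else 0) - nv ℓ j * nv ℓ k) / ‖ℓ‖) := by
  have hn : ‖ℓ‖ ≠ 0 := norm_ne_zero_iff.2 hℓ
  have hμd : HasFDerivAt μ (fderiv ℝ μ ℓ) ℓ :=
    ((hμ.differentiable (by simp)) ℓ).hasFDerivAt
  have h := (hμd.mul (key_deriv_nv hℓ i)).mul (key_deriv_nv hℓ j)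
  have hpd : pd (fun y => μ y * nv y i * nv y j) k ℓ = _ := congrArg (fun L => L (ee k)) h.fderiv
  rw [show pd (fun y => μ y * nv y i * nv y j) k ℓ = _ from hpd]
  have hip : ∀ m : Fin 3, (EuclideanSpace.proj m : E3 →L[ℝ] ℝ) (ee k) = if k = m then 1 else 0 := by
    intro m
    simp [ee, EuclideanSpace.single_apply, eq_comm]
  have hin : (innerSL ℝ ℓ) (ee k) = ℓ k := by
    simp [ee, EuclideanSpace.inner_single_right]
  simp only [ContinuousLinearMap.add_apply, ContinuousLinearMap.smul_apply,
    ContinuousLinearMap.neg_apply, smul_eq_mul, hin, hip]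
  clear h hpd hμd hμ
  simp only [pd, nv, Pi.mul_apply]
  by_cases hki : k = i
  · by_cases hkj : k = j
    · subst hki; subst hkj
      simp only [if_pos rfl, ↓reduceIte]
      field_simp; ring
    · subst hki
      rw [if_pos rfl, if_neg hkj]
      field_simp; ring
  · by_cases hkj : k = j
    · subst hkj
      rw [if_neg hki, if_pos rfl]
      field_simp; ring
    · rw [if_neg hki, if_neg hkj]
      field_simp; ring

lemma nv_sq_sum {ℓ : E3} (hℓ : ℓ ≠ 0) : nv ℓ 0 ^ 2 + nv ℓ 1 ^ 2 + nv ℓ 2 ^ 2 = 1 := by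
  have hn : ‖ℓ‖ ≠ 0 := norm_ne_zero_iff.2 hℓ
  have h := norm_sq_coords ℓ
  rw [Fin.sum_univ_three] at h
  simp only [nv, div_pow]
  rw [← add_div, ← add_div, div_eq_one_iff_eq (pow_ne_zero 2 hn)]
  rw [h]

set_option maxHeartbeats 1000000 in
lemma pointwise_id (μ : E3 → ℝ) (hμ : ContDiff ℝ (⊤ : ℕ∞) μ) (a b : Fin 3 → ℝ) {ℓ : E3} (hℓ : ℓ ≠ 0) :
    (∑ i, ∑ j, ∑ k, pd (fun y => μ y * nv y i * nv y j) k ℓ * a k * b i * a j)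
      = (dotp (gradm μ ℓ) a * dotp (Lproj ℓ b) (Lproj ℓ a)
          + (2 / ‖ℓ‖) * μ ℓ * dotp (nv ℓ) a * dotp (Tproj ℓ b) (Tproj ℓ a))
        - (1 / ‖ℓ‖) * μ ℓ * ∑ i, nv ℓ i * (a i * dotp a b - b i * dotp a a) := by
  have hs := nv_sq_sum hℓ
  simp only [key_deriv μ hμ hℓ]
  simp only [Fin.sum_univ_three, dotp, Lproj, Tproj, gradm]
  norm_num [Fin.ext_iff]
  linear_combination
    (-((pd μ 0 ℓ * a 0 + pd μ 1 ℓ * a 1 + pd μ 2 ℓ * a 2)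
        * (nv ℓ 0 * b 0 + nv ℓ 1 * b 1 + nv ℓ 2 * b 2)
        * (nv ℓ 0 * a 0 + nv ℓ 1 * a 1 + nv ℓ 2 * a 2))
      - 2 * (1 / ‖ℓ‖) * μ ℓ
        * (nv ℓ 0 * a 0 + nv ℓ 1 * a 1 + nv ℓ 2 * a 2) ^ 2
        * (nv ℓ 0 * b 0 + nv ℓ 1 * b 1 + nv ℓ 2 * b 2)) * hs

lemma moll_contDiff {φ : E3 → ℝ} (hφ : ContDiff ℝ (⊤ : ℕ∞) φ) (ε : ℝ) :
    ContDiff ℝ (⊤ : ℕ∞) (moll φ ε) :=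
  contDiff_const.mul (hφ.comp (contDiff_id.const_smul ε⁻¹ : ContDiff ℝ (⊤ : ℕ∞) fun ℓ : E3 => ε⁻¹ • ℓ))

lemma moll_compactSupport {φ : E3 → ℝ} (hc : HasCompactSupport φ) {ε : ℝ} (hε : ε ≠ 0) :
    HasCompactSupport (moll φ ε) := by
  have h1 : HasCompactSupport (fun ℓ : E3 => φ (ε⁻¹ • ℓ)) :=
    hc.comp_isClosedEmbedding
      (Homeomorph.isClosedEmbedding (Homeomorph.smulOfNeZero (ε⁻¹ : ℝ) (inv_ne_zero hε)))
  exact h1.mul_left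

set_option maxHeartbeats 2000000 in
/-- Identity between mollified increment integrals:
∫ ∇φ^ε·δE (δF_L·δE_L) + (2/|ℓ|)φ^ε n·δE (δF_T·δE_T) dℓ
  = ∫ ∂_{ℓ_k}(φ^ε n_i n_j) δE_k δF_i δE_j dℓ
    + ∫ (1/|ℓ|)φ^ε n·[δE(δE·δF) − δF(δE·δE)] dℓ. -/
theorem stmt13 (E F : E3 → E3) (hE : ContDiff ℝ (⊤ : ℕ∞) E) (hF : ContDiff ℝ (⊤ : ℕ∞) F)
    (hEp : Periodic3 E) (hFp : Periodic3 F)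
    (φ : E3 → ℝ) (hφ : Mollifier φ) (ε : ℝ) (hε : 0 < ε) (x : E3) :
    (∫ ℓ : E3,
        dotp (gradm (moll φ ε) ℓ) (incr E ℓ x)
            * dotp (Lproj ℓ (incr F ℓ x)) (Lproj ℓ (incr E ℓ x))
          + (2 / ‖ℓ‖) * moll φ ε ℓ * dotp (nv ℓ) (incr E ℓ x)
            * dotp (Tproj ℓ (incr F ℓ x)) (Tproj ℓ (incr E ℓ x)))
      = (∫ ℓ : E3, ∑ i, ∑ j, ∑ k,
            pd (fun ℓ' => moll φ ε ℓ' * nv ℓ' i * nv ℓ' j) k ℓ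
              * incr E ℓ x k * incr F ℓ x i * incr E ℓ x j)
        + (∫ ℓ : E3, (1 / ‖ℓ‖) * moll φ ε ℓ * ∑ i, nv ℓ i *
            (incr E ℓ x i * dotp (incr E ℓ x) (incr F ℓ x)
              - incr F ℓ x i * dotp (incr E ℓ x) (incr E ℓ x))) := by
  classical
  set μ : E3 → ℝ := moll φ ε with hμdef
  have hμs : ContDiff ℝ (⊤ : ℕ∞) μ := moll_contDiff hφ.1 ε
  have hμc : HasCompactSupport μ := moll_compactSupport hφ.2.1 (ne_of_gt hε)
  set K : Set E3 := tsupport μ with hKdef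
  have hKc : IsCompact K := hμc
  -- the functions
  set fF : E3 → ℝ := fun ℓ =>
      dotp (gradm μ ℓ) (incr E ℓ x) * dotp (Lproj ℓ (incr F ℓ x)) (Lproj ℓ (incr E ℓ x))
        + (2 / ‖ℓ‖) * μ ℓ * dotp (nv ℓ) (incr E ℓ x)
          * dotp (Tproj ℓ (incr F ℓ x)) (Tproj ℓ (incr E ℓ x)) with hfF
  set hH : E3 → ℝ := fun ℓ => (1 / ‖ℓ‖) * μ ℓ * ∑ i, nv ℓ i *
      (incr E ℓ x i * dotp (incr E ℓ x) (incr F ℓ x)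
        - incr F ℓ x i * dotp (incr E ℓ x) (incr E ℓ x)) with hhH
  set gG : E3 → ℝ := fun ℓ => ∑ i, ∑ j, ∑ k,
      pd (fun ℓ' => μ ℓ' * nv ℓ' i * nv ℓ' j) k ℓ
        * incr E ℓ x k * incr F ℓ x i * incr E ℓ x j with hgG
  -- geometry / bounds
  obtain ⟨R, hRK⟩ := hKc.isBounded.subset_closedBall (0 : E3)
  set R₀ : ℝ := max R 0 with hR₀
  have hR₀0 : (0:ℝ) ≤ R₀ := le_max_right _ _
  have hKR : ∀ ℓ ∈ K, ‖ℓ‖ ≤ R₀ := fun ℓ h =>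
    le_trans (mem_closedBall_zero_iff.1 (hRK h)) (le_max_left _ _)
  obtain ⟨CE, hCE⟩ := (isCompact_closedBall x R₀).exists_bound_of_continuousOn
      ((hE.continuous_fderiv (by simp)).continuousOn)
  obtain ⟨CF, hCF⟩ := (isCompact_closedBall x R₀).exists_bound_of_continuousOn
      ((hF.continuous_fderiv (by simp)).continuousOn)
  have hCE0 : 0 ≤ CE := le_trans (norm_nonneg _) (hCE x (Metric.mem_closedBall_self hR₀0))
  have hCF0 : 0 ≤ CF := le_trans (norm_nonneg _) (hCF x (Metric.mem_closedBall_self hR₀0))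
  have hlip : ∀ (G : E3 → E3), ContDiff ℝ (⊤ : ℕ∞) G → ∀ (CG : ℝ),
      (∀ y ∈ Metric.closedBall x R₀, ‖fderiv ℝ G y‖ ≤ CG) →
      ∀ ℓ ∈ K, ∀ i, |incr G ℓ x i| ≤ CG * ‖ℓ‖ := by
    intro G hG CG hCG ℓ hℓ i
    have hmem : x + ℓ ∈ Metric.closedBall x R₀ := by
      rw [Metric.mem_closedBall, dist_eq_norm, add_sub_cancel_left]
      exact hKR ℓ hℓ
    have h1 : |incr G ℓ x i| ≤ ‖G (x + ℓ) - G x‖ := by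
      have h := abs_coord_le (G (x + ℓ) - G x) i
      simpa [incr] using h
    have h2 : ‖G (x + ℓ) - G x‖ ≤ CG * ‖(x + ℓ) - x‖ :=
      (convex_closedBall x R₀).norm_image_sub_le_of_norm_fderiv_le
        (fun y _ => (hG.differentiable (by simp)) y) hCG
        (Metric.mem_closedBall_self hR₀0) hmem
    rw [add_sub_cancel_left] at h2
    exact le_trans h1 h2
  have haℓ : ∀ ℓ ∈ K, ∀ i, |incr E ℓ x i| ≤ CE * ‖ℓ‖ := hlip E hE CE hCE
  have hbℓ : ∀ ℓ ∈ K, ∀ i, |incr F ℓ x i| ≤ CF * ‖ℓ‖ := hlip F hF CF hCF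
  set A : ℝ := CE * R₀ with hA
  set B : ℝ := CF * R₀ with hB
  have haK : ∀ ℓ ∈ K, ∀ i, |incr E ℓ x i| ≤ A := fun ℓ hℓ i =>
    le_trans (haℓ ℓ hℓ i) (mul_le_mul_of_nonneg_left (hKR ℓ hℓ) hCE0)
  have hbK : ∀ ℓ ∈ K, ∀ i, |incr F ℓ x i| ≤ B := fun ℓ hℓ i =>
    le_trans (hbℓ ℓ hℓ i) (mul_le_mul_of_nonneg_left (hKR ℓ hℓ) hCF0)
  have hA0 : 0 ≤ A := mul_nonneg hCE0 hR₀0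
  have hB0 : 0 ≤ B := mul_nonneg hCF0 hR₀0
  obtain ⟨M1, hM1⟩ := hKc.exists_bound_of_continuousOn hμs.continuous.continuousOn
  set M : ℝ := max M1 0 with hM
  have hM0 : 0 ≤ M := le_max_right _ _
  have hMb : ∀ ℓ ∈ K, |μ ℓ| ≤ M := fun ℓ hℓ =>
    le_trans (by rw [← Real.norm_eq_abs]; exact hM1 ℓ hℓ) (le_max_left _ _)
  obtain ⟨M2, hM2⟩ := hKc.exists_bound_of_continuousOn
      ((hμs.continuous_fderiv (by simp)).continuousOn)
  set MP : ℝ := max M2 0 with hMP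
  have hMP0 : 0 ≤ MP := le_max_right _ _
  have hMPb : ∀ ℓ ∈ K, ∀ k, |pd μ k ℓ| ≤ MP := by
    intro ℓ hℓ k
    have h1 : |pd μ k ℓ| ≤ ‖fderiv ℝ μ ℓ‖ * ‖ee k‖ := by
      rw [pd, ← Real.norm_eq_abs]
      exact (fderiv ℝ μ ℓ).le_opNorm (ee k)
    have hek : ‖ee k‖ = 1 := by
      rw [ee, EuclideanSpace.norm_single, norm_one]
    rw [hek, mul_one] at h1
    exact le_trans h1 (le_trans (hM2 ℓ hℓ) (le_max_left _ _))
  -- vanishing outside K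
  have hμ0 : ∀ ℓ, ℓ ∉ K → μ ℓ = 0 := fun ℓ h => image_eq_zero_of_notMem_tsupport h
  have hpd0 : ∀ ℓ, ℓ ∉ K → ∀ k, pd μ k ℓ = 0 := by
    intro ℓ h k
    have hz : fderiv ℝ μ ℓ = 0 := by
      by_contra h'
      exact h (support_fderiv_subset ℝ (Function.mem_support.2 h'))
    rw [pd, hz]
    rfl
  -- measurability
  have hcont_incrE : ∀ i, Continuous fun ℓ : E3 => incr E ℓ x i := by
    intro i
    have h1 : Continuous fun ℓ : E3 => E (x + ℓ) :=
      hE.continuous.comp (continuous_const.add continuous_id)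
    exact (((EuclideanSpace.proj i : E3 →L[ℝ] ℝ).continuous.comp h1)).sub continuous_const
  have hcont_incrF : ∀ i, Continuous fun ℓ : E3 => incr F ℓ x i := by
    intro i
    have h1 : Continuous fun ℓ : E3 => F (x + ℓ) :=
      hF.continuous.comp (continuous_const.add continuous_id)
    exact (((EuclideanSpace.proj i : E3 →L[ℝ] ℝ).continuous.comp h1)).sub continuous_const
  have hmeas_nv : ∀ i, Measurable fun ℓ : E3 => nv ℓ i := fun i =>
    ((EuclideanSpace.proj i : E3 →L[ℝ] ℝ).continuous.measurable).div
      continuous_norm.measurable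
  have hcont_pd : ∀ k, Continuous fun ℓ : E3 => pd μ k ℓ := fun k =>
    (hμs.continuous_fderiv (by simp)).clm_apply continuous_const
  have hmeas_dotp : ∀ (u v : E3 → Fin 3 → ℝ), (∀ i, Measurable fun ℓ => u ℓ i) →
      (∀ i, Measurable fun ℓ => v ℓ i) → Measurable fun ℓ => dotp (u ℓ) (v ℓ) := by
    intro u v hu hv
    simp only [dotp]
    exact Finset.measurable_sum _ (fun i _ => (hu i).mul (hv i))
  have hmeas_L : ∀ (v : E3 → Fin 3 → ℝ), (∀ i, Measurable fun ℓ => v ℓ i) →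
      ∀ i, Measurable fun ℓ => Lproj ℓ (v ℓ) i := by
    intro v hv i
    exact (hmeas_nv i).mul (hmeas_dotp _ _ hmeas_nv hv)
  have hmeas_T : ∀ (v : E3 → Fin 3 → ℝ), (∀ i, Measurable fun ℓ => v ℓ i) →
      ∀ i, Measurable fun ℓ => Tproj ℓ (v ℓ) i := by
    intro v hv i
    exact (hv i).sub (hmeas_L v hv i)
  have hmeasE : ∀ i, Measurable fun ℓ : E3 => incr E ℓ x i :=
    fun i => (hcont_incrE i).measurable
  have hmeasF : ∀ i, Measurable fun ℓ : E3 => incr F ℓ x i :=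
    fun i => (hcont_incrF i).measurable
  have hmeas_inv : Measurable fun ℓ : E3 => (2:ℝ) / ‖ℓ‖ :=
    measurable_const.div continuous_norm.measurable
  have hmeas_inv1 : Measurable fun ℓ : E3 => (1:ℝ) / ‖ℓ‖ :=
    measurable_const.div continuous_norm.measurable
  have hmf : Measurable fF := by
    apply Measurable.add
    · exact (hmeas_dotp _ _ (fun i => (hcont_pd i).measurable) hmeasE).mul
        (hmeas_dotp _ _ (hmeas_L _ hmeasF) (hmeas_L _ hmeasE))
    · exact ((hmeas_inv.mul hμs.continuous.measurable).mul
        (hmeas_dotp _ _ hmeas_nv hmeasE)).mul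
        (hmeas_dotp _ _ (hmeas_T _ hmeasF) (hmeas_T _ hmeasE))
  have hmh : Measurable hH := by
    apply ((hmeas_inv1.mul hμs.continuous.measurable)).mul
    apply Finset.measurable_sum
    intro i _
    exact (hmeas_nv i).mul
      (((hmeasE i).mul (hmeas_dotp _ _ hmeasE hmeasF)).sub
        ((hmeasF i).mul (hmeas_dotp _ _ hmeasE hmeasE)))
  -- a.e. avoidance of 0
  have hne : ∀ᵐ ℓ : E3, ℓ ≠ (0:E3) := by
    refine ae_iff.mpr ?_
    simp only [not_not]
    have h : {a : E3 | a = 0} = {(0:E3)} := by ext a; simp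
    rw [h, measure_singleton]
  -- bounds
  set Cf : ℝ := 3 * (MP * A) * (3 * ((3 * B) * (3 * A))) + 2 * M * (3 * CE) * (3 * ((4 * B) * (4 * A)))
    with hCf
  set Ch : ℝ := M * (3 * (CE * (3 * (A * B)) + CF * (3 * (A * A)))) with hCh
  have hboundf : ∀ ℓ ∈ K, ℓ ≠ 0 → |fF ℓ| ≤ Cf := by
    intro ℓ hℓ h0
    have hr : (0:ℝ) < ‖ℓ‖ := norm_pos_iff.2 h0
    have hterm1 : |dotp (gradm μ ℓ) (incr E ℓ x)
        * dotp (Lproj ℓ (incr F ℓ x)) (Lproj ℓ (incr E ℓ x))|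
        ≤ 3 * (MP * A) * (3 * ((3 * B) * (3 * A))) := by
      rw [abs_mul]
      apply mul_le_mul
      · exact abs_dotp_le (fun i => hMPb ℓ hℓ i) (haK ℓ hℓ)
      · exact abs_dotp_le (fun i => abs_Lproj_le (hbK ℓ hℓ) i)
          (fun i => abs_Lproj_le (haK ℓ hℓ) i)
      · exact abs_nonneg _
      · positivity
    have hterm2 : |(2 / ‖ℓ‖) * μ ℓ * dotp (nv ℓ) (incr E ℓ x)
        * dotp (Tproj ℓ (incr F ℓ x)) (Tproj ℓ (incr E ℓ x))|
        ≤ 2 * M * (3 * CE) * (3 * ((4 * B) * (4 * A))) := by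
      rw [abs_mul, abs_mul, abs_mul]
      have h1 : |2 / ‖ℓ‖| = 2 / ‖ℓ‖ := abs_of_pos (by positivity)
      rw [h1]
      have h2 : |dotp (nv ℓ) (incr E ℓ x)| ≤ 3 * (1 * (CE * ‖ℓ‖)) :=
        abs_dotp_le (abs_nv_le_one ℓ) (haℓ ℓ hℓ)
      have h3 : |dotp (Tproj ℓ (incr F ℓ x)) (Tproj ℓ (incr E ℓ x))| ≤ 3 * ((4 * B) * (4 * A)) :=
        abs_dotp_le (fun i => abs_Tproj_le (hbK ℓ hℓ) i) (fun i => abs_Tproj_le (haK ℓ hℓ) i)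
      calc 2 / ‖ℓ‖ * |μ ℓ| * |dotp (nv ℓ) (incr E ℓ x)|
            * |dotp (Tproj ℓ (incr F ℓ x)) (Tproj ℓ (incr E ℓ x))|
          ≤ 2 / ‖ℓ‖ * M * (3 * (1 * (CE * ‖ℓ‖))) * (3 * ((4 * B) * (4 * A))) := by
            gcongr
            exact hMb ℓ hℓ
        _ = 2 * M * (3 * CE) * (3 * ((4 * B) * (4 * A))) := by
            field_simp
    calc |fF ℓ| ≤ |dotp (gradm μ ℓ) (incr E ℓ x)
          * dotp (Lproj ℓ (incr F ℓ x)) (Lproj ℓ (incr E ℓ x))|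
        + |(2 / ‖ℓ‖) * μ ℓ * dotp (nv ℓ) (incr E ℓ x)
          * dotp (Tproj ℓ (incr F ℓ x)) (Tproj ℓ (incr E ℓ x))| := abs_add_le _ _
      _ ≤ Cf := by rw [hCf]; exact add_le_add hterm1 hterm2
  have hboundh : ∀ ℓ ∈ K, ℓ ≠ 0 → |hH ℓ| ≤ Ch := by
    intro ℓ hℓ h0
    have hr : (0:ℝ) < ‖ℓ‖ := norm_pos_iff.2 h0
    have hsum : |∑ i, nv ℓ i * (incr E ℓ x i * dotp (incr E ℓ x) (incr F ℓ x)
        - incr F ℓ x i * dotp (incr E ℓ x) (incr E ℓ x))|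
        ≤ 3 * (‖ℓ‖ * (CE * (3 * (A * B)) + CF * (3 * (A * A)))) := by
      calc |∑ i, nv ℓ i * (incr E ℓ x i * dotp (incr E ℓ x) (incr F ℓ x)
            - incr F ℓ x i * dotp (incr E ℓ x) (incr E ℓ x))|
          ≤ ∑ i, |nv ℓ i * (incr E ℓ x i * dotp (incr E ℓ x) (incr F ℓ x)
            - incr F ℓ x i * dotp (incr E ℓ x) (incr E ℓ x))| := Finset.abs_sum_le_sum_abs _ _
        _ ≤ ∑ _i : Fin 3, ‖ℓ‖ * (CE * (3 * (A * B)) + CF * (3 * (A * A))) := by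
            apply Finset.sum_le_sum
            intro i _
            rw [abs_mul]
            have hd1 : |incr E ℓ x i * dotp (incr E ℓ x) (incr F ℓ x)|
                ≤ (CE * ‖ℓ‖) * (3 * (A * B)) := by
              rw [abs_mul]
              exact mul_le_mul (haℓ ℓ hℓ i) (abs_dotp_le (haK ℓ hℓ) (hbK ℓ hℓ))
                (abs_nonneg _) (by positivity)
            have hd2 : |incr F ℓ x i * dotp (incr E ℓ x) (incr E ℓ x)|
                ≤ (CF * ‖ℓ‖) * (3 * (A * A)) := by
              rw [abs_mul]
              exact mul_le_mul (hbℓ ℓ hℓ i) (abs_dotp_le (haK ℓ hℓ) (haK ℓ hℓ))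
                (abs_nonneg _) (by positivity)
            have h4 : |incr E ℓ x i * dotp (incr E ℓ x) (incr F ℓ x)
                - incr F ℓ x i * dotp (incr E ℓ x) (incr E ℓ x)|
                ≤ (CE * ‖ℓ‖) * (3 * (A * B)) + (CF * ‖ℓ‖) * (3 * (A * A)) :=
              le_trans (abs_sub _ _) (add_le_add hd1 hd2)
            calc |nv ℓ i| * |incr E ℓ x i * dotp (incr E ℓ x) (incr F ℓ x)
                - incr F ℓ x i * dotp (incr E ℓ x) (incr E ℓ x)|
                ≤ 1 * ((CE * ‖ℓ‖) * (3 * (A * B)) + (CF * ‖ℓ‖) * (3 * (A * A))) :=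
                  mul_le_mul (abs_nv_le_one ℓ i) h4 (abs_nonneg _) zero_le_one
              _ = ‖ℓ‖ * (CE * (3 * (A * B)) + CF * (3 * (A * A))) := by ring
        _ = 3 * (‖ℓ‖ * (CE * (3 * (A * B)) + CF * (3 * (A * A)))) := by
            simp [Finset.sum_const]
    simp only [hhH]
    rw [abs_mul, abs_mul]
    have h1 : |1 / ‖ℓ‖| = 1 / ‖ℓ‖ := abs_of_pos (by positivity)
    rw [h1]
    calc 1 / ‖ℓ‖ * |μ ℓ| * |∑ i, nv ℓ i * (incr E ℓ x i * dotp (incr E ℓ x) (incr F ℓ x)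
          - incr F ℓ x i * dotp (incr E ℓ x) (incr E ℓ x))|
        ≤ 1 / ‖ℓ‖ * M * (3 * (‖ℓ‖ * (CE * (3 * (A * B)) + CF * (3 * (A * A))))) := by
          gcongr
          exact hMb ℓ hℓ
      _ = Ch := by rw [hCh]; field_simp
  -- vanishing of fF and hH outside K
  have hfF0 : ∀ ℓ, ℓ ∉ K → fF ℓ = 0 := by
    intro ℓ h
    simp only [hfF]
    have h1 : dotp (gradm μ ℓ) (incr E ℓ x) = 0 := by
      rw [dotp]
      apply Finset.sum_eq_zero
      intro i _
      simp only [gradm]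
      rw [hpd0 ℓ h i, zero_mul]
    rw [h1, hμ0 ℓ h]
    ring
  have hhH0 : ∀ ℓ, ℓ ∉ K → hH ℓ = 0 := by
    intro ℓ h
    simp only [hhH]
    rw [hμ0 ℓ h]
    ring
  -- integrability
  have hKm : MeasurableSet K := (isClosed_tsupport μ).measurableSet
  have hindf : Integrable (K.indicator fun _ => Cf) := by
    apply IntegrableOn.integrable_indicator _ hKm
    exact integrableOn_const hKc.measure_lt_top.ne
  have hindh : Integrable (K.indicator fun _ => Ch) := by
    apply IntegrableOn.integrable_indicator _ hKm
    exact integrableOn_const hKc.measure_lt_top.ne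
  have hCf0 : 0 ≤ Cf := by rw [hCf]; positivity
  have hCh0 : 0 ≤ Ch := by rw [hCh]; positivity
  have hif : Integrable fF := by
    apply Integrable.mono' hindf hmf.aestronglyMeasurable
    filter_upwards [hne] with ℓ h0
    by_cases hℓ : ℓ ∈ K
    · rw [Set.indicator_of_mem hℓ, Real.norm_eq_abs]
      exact hboundf ℓ hℓ h0
    · rw [Set.indicator_of_notMem hℓ, Real.norm_eq_abs, hfF0 ℓ hℓ]
      simp
  have hih : Integrable hH := by
    apply Integrable.mono' hindh hmh.aestronglyMeasurable
    filter_upwards [hne] with ℓ h0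
    by_cases hℓ : ℓ ∈ K
    · rw [Set.indicator_of_mem hℓ, Real.norm_eq_abs]
      exact hboundh ℓ hℓ h0
    · rw [Set.indicator_of_notMem hℓ, Real.norm_eq_abs, hhH0 ℓ hℓ]
      simp
  -- pointwise identity a.e.
  have hgfh : gG =ᵐ[volume] fun ℓ => fF ℓ - hH ℓ := by
    filter_upwards [hne] with ℓ h0
    exact pointwise_id μ hμs (incr E ℓ x) (incr F ℓ x) h0
  have hg : (∫ ℓ : E3, gG ℓ) = (∫ ℓ : E3, fF ℓ) - ∫ ℓ : E3, hH ℓ := by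
    rw [integral_congr_ae hgfh, integral_sub hif hih]
  show (∫ ℓ : E3, fF ℓ) = (∫ ℓ : E3, gG ℓ) + ∫ ℓ : E3, hH ℓ
  rw [hg]
  ring
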